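/- Suppose μ < ω₂ has cofinality ω, μ is a limit point of C_β for some β with μ < β < ω₂, and the set of limit points of C_μ is cofinal in μ. Then there exists q ∈ Q such that every p ∈ Q_μ has an extension p̄ ≤ p in Q_μ that is incompatible with q in Q. Consequently, Q_μ is not a complete suborder of Q. -/

import Mathlib

open Ordinal Set

universe u

noncomputable section

/-- `ω₁`, the first uncountable cardinal, viewed as an ordinal. -/
def omega1 : Ordinal.{u} := (Cardinal.aleph 1).ord

/-- `ω₂`, the second uncountable cardinal, viewed as an ordinal. -/
def omega2 : Ordinal.{u} := (Cardinal.aleph 2).ord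

/-- `δ` is a limit point of the set of ordinals `s`: `δ > 0` and `sup (s ∩ δ) = δ`. -/
def IsLimPt (s : Set Ordinal.{u}) (δ : Ordinal.{u}) : Prop :=
  0 < δ ∧ sSup (s ∩ Set.Iio δ) = δ

/-- `s` is a closed unbounded subset of the (limit) ordinal `α`: it consists of
ordinals below `α`, is unbounded in `α`, and contains all of its limit points below `α`. -/
def IsClubIn (s : Set Ordinal.{u}) (α : Ordinal.{u}) : Prop :=
  s ⊆ Set.Iio α ∧ (∀ ξ < α, ∃ η ∈ s, ξ < η) ∧ ∀ δ < α, IsLimPt s δ → δ ∈ s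

open Classical in
/-- The order type of a set of ordinals: the unique ordinal `o` whose lift is the
order type of the well-order induced on `s` (taken to be `0` if `s` is too large). -/
def otp (s : Set Ordinal.{u}) : Ordinal.{u} :=
  if h : ∃ o : Ordinal.{u},
      Ordinal.lift.{u + 1, u} o = @Ordinal.type s (Subrel (· < ·) s)
        (by exact (inferInstance : IsWellOrder s (Subrel (· < ·) (· ∈ s))))
  then h.choose else 0

/-- `Λ(α,β)`: the largest limit point of `C β ∩ (α+1)`, taken to be `0` if none exists. -/
def Lam (C : Ordinal.{u} → Set Ordinal.{u}) (α β : Ordinal.{u}) : Ordinal.{u} :=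
  sSup {δ | IsLimPt (C β ∩ Set.Iic α) δ}

/-- `C` is a square-like sequence `⟨C_α : α < ω₂⟩` as in the context:
`C_0 = ∅`, `C_{α+1} = {α}`; for limit `α < ω₂`, `C_α` is club in `α` with
`otp(C_α) ≤ ω₁`, and `otp(C_α) < ω₁` if `cf(α) = ω`; every member of any `C_α`
has cofinality at most `ω`; and `C_α = C_β ∩ α` whenever `α` is a limit point of `C_β`. -/
structure SqSeq (C : Ordinal.{u} → Set Ordinal.{u}) : Prop where
  zero : C 0 = ∅
  succ : ∀ α : Ordinal.{u}, C (α + 1) = {α}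
  club : ∀ α < omega2.{u}, Order.IsSuccLimit α → IsClubIn (C α) α
  otp_le : ∀ α < omega2.{u}, Order.IsSuccLimit α → otp (C α) ≤ omega1
  otp_lt : ∀ α < omega2.{u}, Order.IsSuccLimit α →
    Ordinal.cof α = Cardinal.aleph0 → otp (C α) < omega1
  cof_le : ∀ α β : Ordinal.{u}, β ∈ C α → Ordinal.cof β ≤ Cardinal.aleph0
  coh : ∀ α β : Ordinal.{u}, β < omega2.{u} → IsLimPt (C β) α → C α = C β ∩ Set.Iio α

/-- `rho` is Todorcevic's ρ function associated with the sequence `C`: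
`ρ(α,α) = 0`, `ρ` takes values below `ω₁`, and for `α < β < ω₂`,
`ρ(α,β) = max({otp(C_β ∩ α), ρ(α, min(C_β \ α))} ∪ {ρ(ξ,α) : ξ ∈ C_β ∩ [Λ(α,β), α)})`. -/
structure RhoFun (C : Ordinal.{u} → Set Ordinal.{u})
    (rho : Ordinal.{u} → Ordinal.{u} → Ordinal.{u}) : Prop where
  refl : ∀ α : Ordinal.{u}, rho α α = 0
  lt_omega1 : ∀ α β : Ordinal.{u}, α ≤ β → β < omega2.{u} → rho α β < omega1
  eq : ∀ α β : Ordinal.{u}, α < β → β < omega2.{u} →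
    rho α β = sSup ({otp (C β ∩ Set.Iio α), rho α (sInf (C β ∩ Set.Ici α))} ∪
      (fun ξ => rho ξ α) '' (C β ∩ Set.Ico (Lam C α β) α))


/-- A finite partial function assigning finite sets of countable ordinals to
finitely many ordinals, given by a finite domain and a value function. -/
structure FinPF : Type (u + 1) where
  dom : Finset Ordinal.{u}
  val : Ordinal.{u} → Finset Ordinal.{u}

/-- `p` is a condition of the poset `Q` associated with `rho`: `dom(p) ⊆ ω₂`,
each `p(α)` is a finite subset of `ω₁` meeting each interval `[ν, ν + ω)` in at
most one point, `p(α) ∩ p(β)` is an initial segment of both `p(α)` and `p(β)`,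
and `max(p(α) ∩ p(β)) ≤ ρ(α,β)` for `α < β` in `dom(p)`. -/
def InQ (rho : Ordinal.{u} → Ordinal.{u} → Ordinal.{u}) (p : FinPF.{u}) : Prop :=
  (∀ α ∈ p.dom, α < omega2.{u}) ∧
  (∀ α ∈ p.dom, ∀ ν ∈ p.val α, ν < omega1.{u}) ∧
  (∀ α ∈ p.dom, ∀ ν : Ordinal.{u}, ∀ x ∈ p.val α, ∀ y ∈ p.val α,
    ν ≤ x → x < ν + Ordinal.omega0 → ν ≤ y → y < ν + Ordinal.omega0 → x = y) ∧
  (∀ α ∈ p.dom, ∀ β ∈ p.dom, ∀ x ∈ p.val α ∩ p.val β, ∀ y ∈ p.val α,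
    y < x → y ∈ p.val β) ∧
  (∀ α ∈ p.dom, ∀ β ∈ p.dom, α < β → ∀ ν ∈ p.val α ∩ p.val β, ν ≤ rho α β)

/-- The order of the poset `Q` (and `P`): `q ≤ p` iff `dom(p) ⊆ dom(q)` and
`p(α) ⊆ q(α)` for all `α ∈ dom(p)`. -/
def FinPF.le (q p : FinPF.{u}) : Prop :=
  p.dom ⊆ q.dom ∧ ∀ α ∈ p.dom, p.val α ⊆ q.val α

/-- Two conditions of `Q` are compatible if they have a common extension in `Q`. -/
def QCompat (rho : Ordinal.{u} → Ordinal.{u} → Ordinal.{u}) (p q : FinPF.{u}) : Prop :=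
  ∃ r : FinPF.{u}, InQ rho r ∧ r.le p ∧ r.le q

/-! Let `q = {μ ↦ {ν₀}}` with `ν₀ = otp(C_μ) + 1`. For a limit point `α < μ` of
`C_μ`, `ρ(α, μ) = otp(C_μ ∩ α) < ν₀`, so no condition can put `ν₀` into the values at both `α`
and `μ`. Given `p ∈ Q_μ` compatible with `q` via `r`, choose such an `α` above `dom(p)` and let
`p̄` copy `r` on `dom(p)` and `r(μ) ∋ ν₀` at `α`. Coherence of `C` gives `ρ(δ, α) = ρ(δ, μ)` for
`δ < α`, so `p̄ ∈ Q_μ`, and `p̄ ⊥ q`. A `p` incompatible with `q` is its own `p̄`. -/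

/-- The order type of `s` one universe up, where it always exists. -/
def setType (s : Set Ordinal.{u}) : Ordinal.{u + 1} :=
  @Ordinal.type s (Subrel (· < ·) s)
    (by exact (inferInstance : IsWellOrder s (Subrel (· < ·) (· ∈ s))))

lemma setType_mono {s t : Set Ordinal.{u}} (h : s ⊆ t) : setType s ≤ setType t := by
  have : IsWellOrder s (Subrel (· < ·) s) :=
    inferInstanceAs (IsWellOrder s (Subrel (· < ·) (· ∈ s)))
  have : IsWellOrder t (Subrel (· < ·) t) :=
    inferInstanceAs (IsWellOrder t (Subrel (· < ·) (· ∈ t)))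
  exact RelEmbedding.ordinal_type_le ⟨⟨Set.inclusion h, Set.inclusion_injective h⟩, Iff.rfl⟩

lemma lift_otp {s : Set Ordinal.{u}} {μ : Ordinal.{u}} (hs : s ⊆ Iio μ) :
    Ordinal.lift.{u + 1} (otp s) = setType s := by
  have hex : ∃ o : Ordinal.{u}, Ordinal.lift.{u + 1} o = setType s :=
    Ordinal.mem_range_lift_of_le (a := μ) <| calc
      setType s ≤ setType (Iio μ) := setType_mono hs
      _ = Ordinal.lift.{u + 1} μ := (Ordinal.type_Iio_lt μ).trans (Ordinal.typein_ordinal μ)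
  unfold setType at hex ⊢
  rw [otp, dif_pos hex]
  exact hex.choose_spec

lemma otp_mono {s t : Set Ordinal.{u}} {μ : Ordinal.{u}} (hst : s ⊆ t) (ht : t ⊆ Iio μ) :
    otp s ≤ otp t := by
  rw [← Ordinal.lift_le.{u + 1}, lift_otp (hst.trans ht), lift_otp ht]
  exact setType_mono hst

lemma IsLimPt.exists_mem_between {s : Set Ordinal.{u}} {δ η : Ordinal.{u}} (h : IsLimPt s δ)
    (hη : η < δ) : ∃ ξ ∈ s, η < ξ ∧ ξ < δ := by
  have hne : (s ∩ Iio δ).Nonempty := by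
    by_contra hempty
    rw [not_nonempty_iff_eq_empty] at hempty
    have hsup := h.2
    simp only [hempty, csSup_empty] at hsup
    exact h.1.ne' (hsup.symm.trans Ordinal.bot_eq_zero)
  obtain ⟨ξ, ⟨hξs, hξδ⟩, hηξ⟩ := exists_lt_of_lt_csSup hne (h.2 ▸ hη)
  exact ⟨ξ, hξs, hηξ, hξδ⟩

lemma IsLimPt.le_of_subset_Iic {s : Set Ordinal.{u}} {δ α : Ordinal.{u}} (h : IsLimPt s δ)
    (hs : s ⊆ Iic α) : δ ≤ α := by
  by_contra! hαδ
  obtain ⟨ξ, hξs, hαξ, -⟩ := h.exists_mem_between hαδ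
  exact (hs hξs).not_gt hαξ

lemma Lam_eq_self {C : Ordinal.{u} → Set Ordinal.{u}} {α μ : Ordinal.{u}}
    (h : IsLimPt (C μ) α) : Lam C α μ = α := by
  refine IsGreatest.csSup_eq ⟨⟨h.1, ?_⟩, fun δ hδ => hδ.le_of_subset_Iic inter_subset_right⟩
  rw [inter_assoc, inter_eq_right.mpr Iio_subset_Iic_self]
  exact h.2

section Rho

variable {C : Ordinal.{u} → Set Ordinal.{u}} {rho : Ordinal.{u} → Ordinal.{u} → Ordinal.{u}}
  {μ α δ : Ordinal.{u}}

lemma rho_eq_otp_of_isLimPt (hC : SqSeq C) (hrho : RhoFun C rho) (hμ : μ < omega2.{u})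
    (hμlim : Order.IsSuccLimit μ) (hα : IsLimPt (C μ) α) (hαμ : α < μ) :
    rho α μ = otp (C μ ∩ Iio α) := by
  have hinf : sInf (C μ ∩ Ici α) = α :=
    le_antisymm (csInf_le' ⟨(hC.club μ hμ hμlim).2.2 α hαμ hα, mem_Ici.mpr le_rfl⟩)
      (le_csInf ⟨α, (hC.club μ hμ hμlim).2.2 α hαμ hα, mem_Ici.mpr le_rfl⟩ fun b hb => hb.2)
  rw [hrho.eq α μ hαμ hμ, hinf, hrho.refl, Lam_eq_self hα, Ico_self, inter_empty, image_empty,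
    union_empty, csSup_pair, sup_of_le_left zero_le]

lemma rho_eq_of_isLimPt (hC : SqSeq C) (hrho : RhoFun C rho) (hμ : μ < omega2.{u})
    (hα : IsLimPt (C μ) α) (hαμ : α < μ) (hδα : δ < α) :
    rho δ α = rho δ μ := by
  have hcoh : ∀ t ⊆ Iio α, C α ∩ t = C μ ∩ t := fun t ht => by
    rw [hC.coh α μ hμ hα, inter_assoc, inter_eq_right.mpr ht]
  have hinf : sInf (C α ∩ Ici δ) = sInf (C μ ∩ Ici δ) := by
    obtain ⟨ξ, hξ, hδξ, hξα⟩ := hα.exists_mem_between hδα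
    have hsub : C α ∩ Ici δ ⊆ C μ ∩ Ici δ := by
      rw [hC.coh α μ hμ hα, inter_assoc]
      exact inter_subset_inter_right _ inter_subset_right
    have hmin : sInf (C μ ∩ Ici δ) ∈ C α ∩ Ici δ := by
      obtain ⟨hmin, hδmin⟩ := csInf_mem (s := C μ ∩ Ici δ) ⟨ξ, hξ, hδξ.le⟩
      rw [hC.coh α μ hμ hα]
      exact ⟨⟨hmin, (csInf_le' (s := C μ ∩ Ici δ) ⟨hξ, hδξ.le⟩).trans_lt hξα⟩, hδmin⟩
    exact le_antisymm (csInf_le' hmin) (csInf_le_csInf (OrderBot.bddBelow _) ⟨_, hmin⟩ hsub)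
  have hLam : Lam C δ α = Lam C δ μ := by
    rw [Lam, Lam, hcoh _ fun x hx => (mem_Iic.mp hx).trans_lt hδα]
  rw [hrho.eq δ α hδα (hαμ.trans hμ), hrho.eq δ μ (hδα.trans hαμ) hμ, hinf, hLam,
    hcoh _ (Iio_subset_Iio hδα.le), hcoh _ fun x hx => hx.2.trans hδα]

end Rho

section Conditions

variable {rho : Ordinal.{u} → Ordinal.{u} → Ordinal.{u}}

def FinPF.singleton (μ ν : Ordinal.{u}) : FinPF.{u} := ⟨{μ}, fun _ => {ν}⟩

lemma inQ_singleton {μ ν : Ordinal.{u}} (hμ : μ < omega2.{u}) (hν : ν < omega1.{u}) :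
    InQ rho (FinPF.singleton μ ν) := by
  simp only [InQ, FinPF.singleton, Finset.mem_singleton, Finset.mem_inter]
  refine ⟨?_, ?_, ?_, ?_, ?_⟩ <;> intros <;> simp_all

lemma not_qCompat_singleton {p : FinPF.{u}} {α μ ν : Ordinal.{u}} (hα : α ∈ p.dom)
    (hν : ν ∈ p.val α) (hαμ : α < μ) (hρ : rho α μ < ν) :
    ¬ QCompat rho p (FinPF.singleton μ ν) := by
  rintro ⟨r, hr, hrp, hrq⟩
  have hμ : μ ∈ r.dom := hrq.1 (Finset.mem_singleton_self μ)
  have hνμ : ν ∈ r.val μ := hrq.2 μ (Finset.mem_singleton_self μ) (Finset.mem_singleton_self ν)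
  exact hρ.not_ge <|
    hr.2.2.2.2 α (hrp.1 hα) μ hμ hαμ ν (Finset.mem_inter.mpr ⟨hrp.2 α hα hν, hνμ⟩)

lemma InQ.comap {r : FinPF.{u}} (hr : InQ rho r) {D : Finset Ordinal.{u}}
    {σ : Ordinal.{u} → Ordinal.{u}} (hσD : ∀ γ ∈ D, σ γ ∈ r.dom)
    (hD : ∀ γ ∈ D, γ < omega2.{u})
    (hσ : ∀ γ ∈ D, ∀ γ' ∈ D, γ < γ' → σ γ < σ γ' ∧ rho (σ γ) (σ γ') ≤ rho γ γ') :
    InQ rho ⟨D, r.val ∘ σ⟩ := by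
  obtain ⟨-, hω₁, hgap, hinit, hrho⟩ := hr
  refine ⟨hD, fun γ hγ => hω₁ _ (hσD γ hγ), fun γ hγ => hgap _ (hσD γ hγ),
    fun γ hγ γ' hγ' => hinit _ (hσD γ hγ) _ (hσD γ' hγ'), fun γ hγ γ' hγ' hlt ν hν => ?_⟩
  obtain ⟨hσlt, hρ⟩ := hσ γ hγ γ' hγ' hlt
  exact (hrho _ (hσD γ hγ) _ (hσD γ' hγ') hσlt ν hν).trans hρ

lemma InQ.insert_relabel {r : FinPF.{u}} (hr : InQ rho r)
    {D : Finset Ordinal.{u}} {α μ : Ordinal.{u}} (hD : D ⊆ r.dom) (hμ : μ ∈ r.dom)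
    (hαμ : α < μ) (hDα : ∀ δ ∈ D, δ < α) (hρ : ∀ δ ∈ D, rho δ α = rho δ μ) :
    InQ rho ⟨insert α D, r.val ∘ Function.update id α μ⟩ := by
  have hfix : ∀ δ ∈ D, Function.update id α μ δ = δ := fun δ hδ =>
    Function.update_of_ne (hDα δ hδ).ne _ _
  have hμω₂ : μ < omega2.{u} := hr.1 μ hμ
  refine hr.comap ?_ ?_ ?_ <;> simp only [Finset.forall_mem_insert, Function.update_self]
  · exact ⟨hμ, fun δ hδ => by rw [hfix δ hδ]; exact hD hδ⟩
  · exact ⟨hαμ.trans hμω₂, fun δ hδ => hr.1 δ (hD hδ)⟩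
  · refine ⟨⟨fun h => absurd h (lt_irrefl α), fun δ hδ h => absurd h (hDα δ hδ).not_gt⟩,
      fun δ hδ => ⟨fun _ => ?_, fun δ' hδ' hlt => ?_⟩⟩
    · rw [hfix δ hδ, hρ δ hδ]
      exact ⟨(hDα δ hδ).trans hαμ, le_rfl⟩
    · rw [hfix δ hδ, hfix δ' hδ']
      exact ⟨hlt, le_rfl⟩

end Conditions

theorem Qmu_not_complete_suborder_general (C : Ordinal.{u} → Set Ordinal.{u}) (hC : SqSeq C)
    (rho : Ordinal.{u} → Ordinal.{u} → Ordinal.{u}) (hrho : RhoFun C rho)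
    (μ : Ordinal.{u}) (hμ : μ < omega2.{u}) (hcf : Ordinal.cof μ = Cardinal.aleph0)
    (hlp : ∀ η < μ, ∃ δ, η ≤ δ ∧ δ < μ ∧ IsLimPt (C μ) δ) :
    ∃ q : FinPF.{u}, InQ rho q ∧
      ∀ p : FinPF.{u}, InQ rho p → (∀ α ∈ p.dom, α < μ) →
        ∃ pbar : FinPF.{u}, InQ rho pbar ∧ (∀ α ∈ pbar.dom, α < μ) ∧
          pbar.le p ∧ ¬ QCompat rho pbar q := by
  have hμlim : Order.IsSuccLimit μ := Ordinal.one_lt_cof_iff.mp (hcf ▸ Cardinal.one_lt_aleph0)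
  set ν₀ := Order.succ (otp (C μ))
  have hν₀ : ν₀ < omega1.{u} := (Cardinal.isSuccLimit_ord (Cardinal.aleph0_le_aleph 1)).succ_lt
    (hC.otp_lt μ hμ hμlim hcf)
  refine ⟨FinPF.singleton μ ν₀, inQ_singleton hμ hν₀, fun p hp hpμ => ?_⟩
  by_cases hpq : ¬ QCompat rho p (FinPF.singleton μ ν₀)
  · exact ⟨p, hp, hpμ, ⟨subset_rfl, fun _ _ => subset_rfl⟩, hpq⟩
  obtain ⟨r, hr, hrp, hrq⟩ := not_not.mp hpq
  obtain ⟨α, hpα, hαμ, hα⟩ := hlp (p.dom.sup Order.succ)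
    ((Finset.sup_lt_iff hμlim.bot_lt).mpr fun δ hδ => hμlim.succ_lt (hpμ δ hδ))
  have hdomα : ∀ δ ∈ p.dom, δ < α := fun δ hδ =>
    (Order.lt_succ δ).trans_le ((Finset.le_sup (f := Order.succ) hδ).trans hpα)
  have hρα : rho α μ < ν₀ := by
    rw [rho_eq_otp_of_isLimPt hC hrho hμ hμlim hα hαμ]
    exact Order.lt_succ_of_le (otp_mono inter_subset_left (hC.club μ hμ hμlim).1)
  have hμr : μ ∈ r.dom := hrq.1 (Finset.mem_singleton_self μ)
  refine ⟨⟨insert α p.dom, r.val ∘ Function.update id α μ⟩,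
    hr.insert_relabel hrp.1 hμr hαμ hdomα fun δ hδ => rho_eq_of_isLimPt hC hrho hμ hα hαμ
      (hdomα δ hδ), ?_, ⟨Finset.subset_insert _ _, fun δ hδ => ?_⟩,
    not_qCompat_singleton (Finset.mem_insert_self α p.dom) ?_ hαμ hρα⟩
  · simpa only [Finset.forall_mem_insert] using ⟨hαμ, hpμ⟩
  · simpa only [Function.comp_apply, Function.update_of_ne (hdomα δ hδ).ne, id_eq] using hrp.2 δ hδ
  · simpa only [Function.comp_apply, Function.update_self] using
      hrq.2 μ (Finset.mem_singleton_self μ) (Finset.mem_singleton_self ν₀)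

/-- If `μ < ω₂` has cofinality `ω`, `μ` is a limit point of some `C_β` with
`μ < β < ω₂`, and the limit points of `C_μ` are cofinal in `μ`, then there is a
condition `q ∈ Q` such that every `p ∈ Q_μ` has an extension `p̄ ∈ Q_μ`
incompatible with `q` in `Q`; hence `Q_μ` is not a complete suborder of `Q`. -/
theorem Qmu_not_complete_suborder (C : Ordinal.{u} → Set Ordinal.{u}) (hC : SqSeq C)
    (rho : Ordinal.{u} → Ordinal.{u} → Ordinal.{u}) (hrho : RhoFun C rho)
    (μ : Ordinal.{u}) (hμ : μ < omega2.{u}) (hcf : Ordinal.cof μ = Cardinal.aleph0)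
    (hβ : ∃ β : Ordinal.{u}, μ < β ∧ β < omega2.{u} ∧ IsLimPt (C β) μ)
    (hlp : ∀ η < μ, ∃ δ, η ≤ δ ∧ δ < μ ∧ IsLimPt (C μ) δ) :
    ∃ q : FinPF.{u}, InQ rho q ∧
      ∀ p : FinPF.{u}, InQ rho p → (∀ α ∈ p.dom, α < μ) →
        ∃ pbar : FinPF.{u}, InQ rho pbar ∧ (∀ α ∈ pbar.dom, α < μ) ∧
          pbar.le p ∧ ¬ QCompat rho pbar q :=
  Qmu_not_complete_suborder_general C hC rho hrho μ hμ hcf hlp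
end
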